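/- Any self-adjoint operator β on ℂ⁴ ⊗ ℂ² ⊗ ℂ⁴ satisfying β² = 1, βJ = Jβ, and commuting with the represented unreduced Pati-Salam algebra ℍ_R ⊕ ℍ_L ⊕ M_4(ℂ) must be of the form β = diag(η₁1₂, η₂1₂) ⊗ e₁₁ ⊗ 1₄ + 1₄ ⊗ e₂₂ ⊗ diag(η₁1₂, η₂1₂) with η₁, η₂ ∈ {±1}; in particular there are, up to overall sign, only two such operators and the nontrivial one is diag(1₂,-1₂) ⊗ e₁₁ ⊗ 1₄ + 1₄ ⊗ e₂₂ ⊗ diag(1₂,-1₂). -/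

import Mathlib

noncomputable section
open Matrix
open scoped ComplexConjugate

abbrev M2 : Type := Matrix (Fin 2) (Fin 2) ℂ
abbrev M3 : Type := Matrix (Fin 3) (Fin 3) ℂ
abbrev M4 : Type := Matrix (Fin 4) (Fin 4) ℂ
abbrev Idx : Type := Fin 4 × Fin 2 × Fin 4
abbrev M32 : Type := Matrix Idx Idx ℂ

/-- matrix unit `e_{ij}` -/
def eu {n : ℕ} (i j : Fin n) : Matrix (Fin n) (Fin n) ℂ := Matrix.single i j 1

/-- the element `A ⊗ E ⊗ B` of `M₄(ℂ) ⊗ M₂(ℂ) ⊗ M₄(ℂ)` realized as a matrix on `ℂ⁴ ⊗ ℂ² ⊗ ℂ⁴` -/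
def tp (A : M4) (E : M2) (B : M4) : M32 :=
  Matrix.of fun p q => A p.1 q.1 * E p.2.1 q.2.1 * B p.2.2 q.2.2

/-- a 4×4 matrix assembled from four 2×2 blocks -/
def bm (a b c d : M2) : M4 :=
  Matrix.reindex finSumFinEquiv finSumFinEquiv (Matrix.fromBlocks a b c d)

/-- block-diagonal `diag(a, b)` with 2×2 blocks -/
def diag22 (a b : M2) : M4 := bm a 0 0 b

/-- block-diagonal `diag(l, n)` with a scalar and a 3×3 block -/
def diag13 (l : ℂ) (n : M3) : M4 :=
  Matrix.reindex finSumFinEquiv finSumFinEquiv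
    (Matrix.fromBlocks (Matrix.diagonal fun _ : Fin 1 => l) 0 0 n)

/-- the standard embedding of the quaternions into `M₂(ℂ)` -/
def IsQuat (q : M2) : Prop := ∃ x y : ℂ, q = !![x, y; -(conj y), conj x]

/-- the Hilbert space `ℂ⁴ ⊗ ℂ² ⊗ ℂ⁴ ≅ M₄(ℂ) ⊕ M₄(ℂ)` -/
abbrev HSp : Type := Idx → ℂ

/-- index swap underlying the real structure `J` -/
def sw (p : Idx) : Idx := (p.2.2, if p.2.1 = 0 then 1 else 0, p.1)

/-- the antilinear real structure `J[v;w] = [w*;v*]` -/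
noncomputable def Jr (ψ : HSp) : HSp := fun p => conj (ψ (sw p))

/-- action of an operator on the Hilbert space -/
def act (X : M32) (ψ : HSp) : HSp := X.mulVec ψ

/-- conjugation `X ↦ J X J⁻¹` by the real structure, at the matrix level -/
noncomputable def Jconj (X : M32) : M32 := Matrix.of fun p q => conj (X (sw p) (sw q))

/-- the opposite-algebra element `J X* J⁻¹` -/
noncomputable def opp (X : M32) : M32 := Jconj Xᴴ

/-- representation of the (unreduced) Pati–Salam algebra `ℍ_R ⊕ ℍ_L ⊕ M₄(ℂ)` -/
def piPS (q₁ q₂ : M2) (m : M4) : M32 :=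
  tp (diag22 q₁ q₂) (eu 0 0) 1 + tp m (eu 1 1) 1

/-- representation of the reduced Pati–Salam algebra `ℍ_R ⊕ ℍ_L ⊕ ℂ ⊕ M₃(ℂ)` -/
def piRed (q₁ q₂ : M2) (l : ℂ) (n : M3) : M32 := piPS q₁ q₂ (diag13 l n)

/-- the grading γ -/
def gam : M32 := tp (diag22 1 (-1)) (eu 0 0) 1 + tp 1 (eu 1 1) (diag22 (-1) 1)

/-- the grading γ⋆ -/
def gamStar : M32 :=
  tp (diag22 1 (-1)) (eu 0 0) (diag13 1 (-1)) + tp (diag13 (-1) 1) (eu 1 1) (diag22 1 (-1))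

/-- the nontrivial β for the unreduced model -/
def betaPS : M32 := tp (diag22 1 (-1)) (eu 0 0) 1 + tp 1 (eu 1 1) (diag22 1 (-1))

/-!
The quaternions span `M₂(ℂ)` over `ℂ` (indeed `M₂(ℂ) = ℍ + iℍ`), so `β` commutes with the whole
complex algebra `(M₂(ℂ) ⊕ M₂(ℂ)) ⊗ e₁₁ ⊗ 1 + M₄(ℂ) ⊗ e₂₂ ⊗ 1`. Testing against its matrix units
shows that `β` preserves each sector `(i, s)` of `ℂ⁴ ⊗ ℂ²` and acts in the same way on sectors
linked by the algebra. The real structure `J` exchanges the first and third tensor factors while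
swapping the two sectors of `ℂ²`, so it turns the entries of `β` inside a sector into entries
between different sectors: `β` is diagonal, with entry `conj (f i)` at `(i, 0, a)` and `f a` at
`(i, 1, a)`, where `f` is constant on the two blocks of `ℂ⁴`. Finally `β² = 1` gives `f = ±1`.
-/

theorem tp_add_left (A A' : M4) (E : M2) (B : M4) : tp (A + A') E B = tp A E B + tp A' E B := by
  ext p q; simp only [tp, of_apply, Matrix.add_apply]; ring

theorem tp_smul_left (c : ℂ) (A : M4) (E : M2) (B : M4) : tp (c • A) E B = c • tp A E B := by
  ext p q; simp only [tp, of_apply, Matrix.smul_apply, smul_eq_mul]; ring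

theorem tp_zero_left (E : M2) (B : M4) : tp 0 E B = 0 := by
  ext p q; simp [tp]

theorem diag22_add (a a' b b' : M2) : diag22 (a + a') (b + b') = diag22 a b + diag22 a' b' := by
  unfold diag22 bm
  rw [← add_zero 0, ← fromBlocks_add, add_zero]
  rfl

theorem diag22_smul (c : ℂ) (a b : M2) : diag22 (c • a) (c • b) = c • diag22 a b := by
  unfold diag22 bm
  rw [← smul_zero c, ← fromBlocks_smul, smul_zero]
  rfl

theorem diag22_zero : diag22 0 0 = 0 := by
  simp [diag22, bm]

theorem fromBlocks_single_zero {l m n o α : Type*} [DecidableEq l] [DecidableEq m]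
    [DecidableEq n] [DecidableEq o] [Zero α] (i : n) (j : l) (r : α) :
    fromBlocks (single i j r) 0 0 (0 : Matrix o m α) = single (Sum.inl i) (Sum.inl j) r := by
  ext (_ | _) (_ | _) <;> simp [single_apply]

theorem zero_fromBlocks_single {l m n o α : Type*} [DecidableEq l] [DecidableEq m]
    [DecidableEq n] [DecidableEq o] [Zero α] (i : o) (j : m) (r : α) :
    fromBlocks (0 : Matrix n l α) 0 0 (single i j r) = single (Sum.inr i) (Sum.inr j) r := by
  ext (_ | _) (_ | _) <;> simp [single_apply]

theorem diag22_eu_zero (k l : Fin 2) :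
    diag22 (eu k l) 0 = eu (Fin.castAdd 2 k) (Fin.castAdd 2 l) := by
  simp only [diag22, bm, eu, fromBlocks_single_zero, reindex_apply, submatrix_single_equiv,
    Equiv.symm_symm, finSumFinEquiv_apply_left]

theorem diag22_zero_eu (k l : Fin 2) :
    diag22 0 (eu k l) = eu (Fin.natAdd 2 k) (Fin.natAdd 2 l) := by
  simp only [diag22, bm, eu, zero_fromBlocks_single, reindex_apply, submatrix_single_equiv,
    Equiv.symm_symm, finSumFinEquiv_apply_right]

theorem diag22_smul_one (x y : ℂ) : diag22 (x • 1) (y • 1) = diagonal ![x, x, y, y] := by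
  simp only [diag22, bm, smul_one_eq_diagonal, fromBlocks_diagonal, reindex_apply,
    submatrix_diagonal_equiv]
  congr 1 with i
  fin_cases i <;> rfl

theorem piPS_add_smul (q₁ q₂ q₁' q₂' : M2) (m : M4) (c : ℂ) :
    piPS (q₁ + c • q₁') (q₂ + c • q₂') m = piPS q₁ q₂ m + c • piPS q₁' q₂' 0 := by
  simp only [piPS, diag22_add, diag22_smul, tp_add_left, tp_smul_left, tp_zero_left, add_zero]
  abel

theorem piPS_zero_zero (m : M4) : piPS 0 0 m = tp m (eu 1 1) 1 := by
  rw [piPS, diag22_zero, tp_zero_left, zero_add]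

theorem piPS_eu_zero_zero (k l : Fin 2) :
    piPS (eu k l) 0 0 = tp (eu (Fin.castAdd 2 k) (Fin.castAdd 2 l)) (eu 0 0) 1 := by
  rw [piPS, diag22_eu_zero, tp_zero_left, add_zero]

theorem piPS_zero_eu_zero (k l : Fin 2) :
    piPS 0 (eu k l) 0 = tp (eu (Fin.natAdd 2 k) (Fin.natAdd 2 l)) (eu 0 0) 1 := by
  rw [piPS, diag22_zero_eu, tp_zero_left, add_zero]

def sectorDiagonal (v w : Fin 4 → ℂ) : M32 :=
  diagonal fun p => if p.2.1 = 0 then v p.1 else w p.2.2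

theorem tp_diagonal_add_tp_diagonal (v w : Fin 4 → ℂ) :
    tp (diagonal v) (eu 0 0) 1 + tp 1 (eu 1 1) (diagonal w) = sectorDiagonal v w := by
  ext ⟨i, s, a⟩ ⟨j, t, b⟩
  fin_cases s <;> fin_cases t <;> by_cases hij : i = j <;> by_cases hab : a = b <;>
    simp [tp, sectorDiagonal, eu, single_apply, one_apply, hij, hab]

theorem sectorDiagonal_mul (v w v' w' : Fin 4 → ℂ) :
    sectorDiagonal v w * sectorDiagonal v' w' = sectorDiagonal (v * v') (w * w') := by
  simp only [sectorDiagonal, diagonal_mul_diagonal]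
  congr 1 with p
  split_ifs <;> rfl

theorem sectorDiagonal_one : sectorDiagonal 1 1 = 1 := by
  simp [sectorDiagonal, ← diagonal_one]

theorem sectorDiagonal_neg (v w : Fin 4 → ℂ) :
    -sectorDiagonal v w = sectorDiagonal (-v) (-w) := by
  simp only [sectorDiagonal, diagonal_neg]
  congr 1 with p
  split_ifs <;> rfl

theorem betaPS_eq_sectorDiagonal : betaPS = sectorDiagonal ![1, 1, -1, -1] ![1, 1, -1, -1] := by
  rw [← tp_diagonal_add_tp_diagonal, ← diag22_smul_one, one_smul, neg_smul, one_smul, betaPS]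

theorem sectorDiagonal_eq_one_or_neg_one_or_betaPS_or_neg_betaPS {η₁ η₂ : ℂ}
    (h₁ : η₁ = 1 ∨ η₁ = -1) (h₂ : η₂ = 1 ∨ η₂ = -1) :
    let X := sectorDiagonal ![η₁, η₁, η₂, η₂] ![η₁, η₁, η₂, η₂]
    X = 1 ∨ X = -1 ∨ X = betaPS ∨ X = -betaPS := by
  rw [betaPS_eq_sectorDiagonal, sectorDiagonal_neg, ← sectorDiagonal_one, sectorDiagonal_neg]
  rcases h₁ with rfl | rfl <;> rcases h₂ with rfl | rfl
  · left; congr 1 <;> ext i <;> fin_cases i <;> rfl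
  · right; right; left; rfl
  · right; right; right; congr 1 <;> ext i <;> fin_cases i <;> simp
  · right; left; congr 1 <;> ext i <;> fin_cases i <;> simp

theorem exists_isQuat_add_I_smul (a : M2) :
    ∃ q q' : M2, IsQuat q ∧ IsQuat q' ∧ a = q + Complex.I • q' := by
  refine ⟨_, _, ⟨(a 0 0 + conj (a 1 1)) / 2, (a 0 1 - conj (a 1 0)) / 2, rfl⟩,
    ⟨-Complex.I * (a 0 0 - conj (a 1 1)) / 2, -Complex.I * (a 0 1 + conj (a 1 0)) / 2, rfl⟩, ?_⟩
  ext i j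
  fin_cases i <;> fin_cases j <;> simp [Complex.conj_I, map_ofNat] <;> ring_nf <;>
    simp [Complex.I_sq] <;> ring

theorem commute_piPS_of_isQuat {β : M32}
    (hcomm : ∀ q₁ q₂ m, IsQuat q₁ → IsQuat q₂ → Commute β (piPS q₁ q₂ m)) (a b : M2) (m : M4) :
    Commute β (piPS a b m) := by
  obtain ⟨q₁, q₁', h₁, h₁', rfl⟩ := exists_isQuat_add_I_smul a
  obtain ⟨q₂, q₂', h₂, h₂', rfl⟩ := exists_isQuat_add_I_smul b
  rw [piPS_add_smul]
  exact (hcomm _ _ _ h₁ h₂).add_right ((hcomm _ _ _ h₁' h₂').smul_right _)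

theorem mul_tp_eu_apply (β : M32) (i j : Fin 4) (s t : Fin 2) (p : Idx) (b : Fin 4) :
    (β * tp (eu i j) (eu s t) 1) p (j, t, b) = β p (i, s, b) := by
  simp [mul_apply, Fintype.sum_prod_type, tp, eu, single_apply, one_apply]

theorem tp_eu_mul_apply (β : M32) (i j : Fin 4) (s t : Fin 2) (a : Fin 4) (q : Idx) :
    (tp (eu i j) (eu s t) 1 * β) (i, s, a) q = β (j, t, a) q := by
  simp [mul_apply, Fintype.sum_prod_type, tp, eu, single_apply, one_apply]

theorem tp_eu_mul_apply_of_ne (β : M32) (i j : Fin 4) (s t : Fin 2) {p : Idx}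
    (hp : (p.1, p.2.1) ≠ (i, s)) (q : Idx) : (tp (eu i j) (eu s t) 1 * β) p q = 0 := by
  rw [ne_eq, Prod.mk.injEq, not_and_or] at hp
  rw [mul_apply]
  refine Finset.sum_eq_zero fun r _ => ?_
  rcases hp with hp | hp <;> simp [tp, eu, single_apply, Ne.symm hp]

section Commutant

variable {β : M32}

theorem apply_eq_zero_of_commute_tp_eu {i j : Fin 4} {s t : Fin 2}
    (h : Commute β (tp (eu i j) (eu s t) 1)) {p : Idx} (hp : (p.1, p.2.1) ≠ (i, s)) (b : Fin 4) :
    β p (i, s, b) = 0 := by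
  simpa [mul_tp_eu_apply, tp_eu_mul_apply_of_ne _ _ _ _ _ hp] using congr_fun₂ h.eq p (j, t, b)

theorem apply_eq_apply_of_commute_tp_eu {i j : Fin 4} {s t : Fin 2}
    (h : Commute β (tp (eu i j) (eu s t) 1)) (a b : Fin 4) :
    β (i, s, a) (i, s, b) = β (j, t, a) (j, t, b) := by
  simpa [mul_tp_eu_apply, tp_eu_mul_apply] using congr_fun₂ h.eq (i, s, a) (j, t, b)

theorem commute_tp_eu_self (hβ : ∀ a b m, Commute β (piPS a b m)) (i : Fin 4) (s : Fin 2) :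
    Commute β (tp (eu i i) (eu s s) 1) := by
  fin_cases s
  · refine (Fin.forall_fin_add (m := 2) (n := 2)
      (P := fun i => Commute β (tp (eu i i) (eu 0 0) 1))).2 ⟨fun k => ?_, fun k => ?_⟩ i
    · exact piPS_eu_zero_zero k k ▸ hβ _ _ _
    · exact piPS_zero_eu_zero k k ▸ hβ _ _ _
  · exact piPS_zero_zero (eu i i) ▸ hβ _ _ _

theorem apply_eq_zero_of_sector_ne (hβ : ∀ a b m, Commute β (piPS a b m)) {p q : Idx}
    (h : (p.1, p.2.1) ≠ (q.1, q.2.1)) : β p q = 0 :=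
  apply_eq_zero_of_commute_tp_eu (commute_tp_eu_self hβ q.1 q.2.1) h q.2.2

theorem apply_one_eq_apply_zero_one (hβ : ∀ a b m, Commute β (piPS a b m)) (i a b : Fin 4) :
    β (i, 1, a) (i, 1, b) = β (0, 1, a) (0, 1, b) :=
  apply_eq_apply_of_commute_tp_eu (piPS_zero_zero (eu i 0) ▸ hβ _ _ _) a b

theorem apply_one_zero_eq_apply_zero_zero (hβ : ∀ a b m, Commute β (piPS a b m)) (a b : Fin 4) :
    β (1, 0, a) (1, 0, b) = β (0, 0, a) (0, 0, b) :=
  apply_eq_apply_of_commute_tp_eu (piPS_eu_zero_zero 1 0 ▸ hβ _ _ _) a b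

theorem apply_three_zero_eq_apply_two_zero (hβ : ∀ a b m, Commute β (piPS a b m)) (a b : Fin 4) :
    β (3, 0, a) (3, 0, b) = β (2, 0, a) (2, 0, b) :=
  apply_eq_apply_of_commute_tp_eu (piPS_zero_eu_zero 1 0 ▸ hβ _ _ _) a b

theorem sw_zero (i a : Fin 4) : sw (i, 0, a) = (a, 1, i) := rfl

theorem apply_eq_conj_apply_sw (hJ : Jconj β = β) (p q : Idx) :
    β p q = conj (β (sw p) (sw q)) :=
  (congr_fun₂ hJ p q).symm

theorem isDiag_of_commute_piPS_of_Jconj (hβ : ∀ a b m, Commute β (piPS a b m))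
    (hJ : Jconj β = β) : β.IsDiag := by
  intro p q hpq
  by_cases h : (p.1, p.2.1) = (q.1, q.2.1)
  · have hab : p.2.2 ≠ q.2.2 := fun h' => hpq (by simp_all [Prod.ext_iff])
    rw [apply_eq_conj_apply_sw hJ, apply_eq_zero_of_sector_ne hβ, map_zero]
    simp [sw, hab]
  · exact apply_eq_zero_of_sector_ne hβ h

theorem exists_eq_sectorDiagonal (hβ : ∀ a b m, Commute β (piPS a b m))
    (hJ : Jconj β = β) :
    ∃ f : Fin 4 → ℂ, f 1 = f 0 ∧ f 3 = f 2 ∧ β = sectorDiagonal (fun i => conj (f i)) f := by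
  set f : Fin 4 → ℂ := fun a => β (0, 1, a) (0, 1, a)
  have hzero : ∀ i a, β (i, 0, a) (i, 0, a) = conj (f i) := fun i a => by
    rw [apply_eq_conj_apply_sw hJ, sw_zero, apply_one_eq_apply_zero_one hβ]
  have hf : ∀ i j, β (i, 0, 0) (i, 0, 0) = β (j, 0, 0) (j, 0, 0) → f i = f j := fun i j h =>
    star_injective (by rwa [hzero, hzero] at h)
  refine ⟨f, hf _ _ (apply_one_zero_eq_apply_zero_zero hβ 0 0),
    hf _ _ (apply_three_zero_eq_apply_two_zero hβ 0 0), ?_⟩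
  rw [← (isDiag_of_commute_piPS_of_Jconj hβ hJ).diagonal_diag, sectorDiagonal]
  congr 1 with ⟨i, s, a⟩
  fin_cases s
  · exact hzero i a
  · exact apply_one_eq_apply_zero_one hβ i a a

end Commutant

theorem beta_unreduced_general_general (β : M32)
    (hsq : β * β = 1) (hJ : Jconj β = β)
    (hcomm : ∀ (q₁ q₂ : M2) (m : M4), IsQuat q₁ → IsQuat q₂ →
      β * piPS q₁ q₂ m = piPS q₁ q₂ m * β) :
    (∃ η₁ η₂ : ℂ, (η₁ = 1 ∨ η₁ = -1) ∧ (η₂ = 1 ∨ η₂ = -1) ∧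
      β = tp (diag22 (η₁ • 1) (η₂ • 1)) (eu 0 0) 1 +
          tp 1 (eu 1 1) (diag22 (η₁ • 1) (η₂ • 1))) ∧
    (β = 1 ∨ β = -1 ∨ β = betaPS ∨ β = -betaPS) := by
  obtain ⟨f, hf₁, hf₃, hβf⟩ := exists_eq_sectorDiagonal (commute_piPS_of_isQuat hcomm) hJ
  have hf_sq : ∀ a, f a = 1 ∨ f a = -1 := fun a => by
    rw [hβf, sectorDiagonal_mul] at hsq
    exact mul_self_eq_one_iff.mp <| by
      simpa [sectorDiagonal] using congr_fun₂ hsq (0, 1, a) (0, 1, a)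
  have hf_real : (fun i => conj (f i)) = f :=
    funext fun a => by rcases hf_sq a with h | h <;> simp [h]
  have hf_blocks : f = ![f 0, f 0, f 2, f 2] := by
    ext i; fin_cases i <;> simp [hf₁, hf₃]
  have hβ : β = sectorDiagonal ![f 0, f 0, f 2, f 2] ![f 0, f 0, f 2, f 2] := by
    rw [hβf, hf_real, ← hf_blocks]
  refine ⟨⟨f 0, f 2, hf_sq 0, hf_sq 2, ?_⟩, ?_⟩
  · rw [diag22_smul_one, tp_diagonal_add_tp_diagonal, hβ]
  · rw [hβ]
    exact sectorDiagonal_eq_one_or_neg_one_or_betaPS_or_neg_betaPS (hf_sq 0) (hf_sq 2)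

/-- Any self-adjoint `β` with `β² = 1`, `βJ = Jβ`, commuting with the represented
unreduced Pati–Salam algebra (no one-term assumption) is of the form
`diag(η₁1₂, η₂1₂) ⊗ e₁₁ ⊗ 1₄ + 1₄ ⊗ e₂₂ ⊗ diag(η₁1₂, η₂1₂)` with `η₁, η₂ = ±1`;
in particular `β` is one of four operators, the nontrivial ones (up to sign)
being `±1` and `±(diag(1₂,-1₂) ⊗ e₁₁ ⊗ 1₄ + 1₄ ⊗ e₂₂ ⊗ diag(1₂,-1₂))`. -/
theorem beta_unreduced_general (β : M32)
    (hsa : βᴴ = β) (hsq : β * β = 1) (hJ : Jconj β = β)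
    (hcomm : ∀ (q₁ q₂ : M2) (m : M4), IsQuat q₁ → IsQuat q₂ →
      β * piPS q₁ q₂ m = piPS q₁ q₂ m * β) :
    (∃ η₁ η₂ : ℂ, (η₁ = 1 ∨ η₁ = -1) ∧ (η₂ = 1 ∨ η₂ = -1) ∧
      β = tp (diag22 (η₁ • 1) (η₂ • 1)) (eu 0 0) 1 +
          tp 1 (eu 1 1) (diag22 (η₁ • 1) (η₂ • 1))) ∧
    (β = 1 ∨ β = -1 ∨ β = betaPS ∨ β = -betaPS) :=
  beta_unreduced_general_general β hsq hJ hcomm
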